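/- arXiv:0911.0937 — 2 statements merged into one kernel-verified Lean document; each statement's English description precedes it below -/
import Mathlib

section
/- Let P and Q be probability measures with positive densities p, q with respect to a σ-finite measure λ, and let φ be strictly convex and differentiable on (0,∞) with φ(1)=0. Define φ#(t) = φ(t) − tφ'(t). Then for any third probability measure P̃ with positive density p̃, the quantity ∫ φ'(p/p̃) dP + ∫ φ#(p/p̃) dQ is at most D_φ(P,Q) = ∫ φ(p/q) dQ, with equality if and only if p̃ = q λ-almost surely. (All integrals assumed finite.) -/
/-!
For `s = p/p̃` and `t = p/q` the two integrands on the left combine into `q` times the tangent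
line of `φ` at `s` evaluated at `t`. Strict convexity puts this tangent line strictly below `φ`
except at the point of tangency, so the left side is at most `∫ φ(p/q) q = D_φ(P, Q)`, with
equality exactly where `p/p̃ = p/q`, i.e. `p̃ = q`, almost everywhere.
-/

open MeasureTheory

/-- The intercept `φ#(t) = φ(t) - t φ'(t)` of the tangent line to `φ` at `t`. -/
noncomputable def tangentIntercept (φ : ℝ → ℝ) (t : ℝ) : ℝ := φ t - t * deriv φ t

lemma deriv_mul_add_tangentIntercept_mul (φ : ℝ → ℝ) (s a : ℝ) {b : ℝ} (hb : b ≠ 0) :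
    deriv φ s * a + tangentIntercept φ s * b = (φ s + deriv φ s * (a / b - s)) * b := by
  rw [tangentIntercept]
  field_simp
  ring

namespace StrictConvexOn

variable {S : Set ℝ} {f : ℝ → ℝ} {x y : ℝ}

lemma add_deriv_mul_sub_lt (hf : StrictConvexOn ℝ S f) (hx : x ∈ S) (hy : y ∈ S) (hxy : x ≠ y)
    (hfd : DifferentiableAt ℝ f x) : f x + deriv f x * (y - x) < f y := by
  rcases hxy.lt_or_gt with h | h
  · have := hf.deriv_lt_slope hx hy h hfd
    rw [slope_def_field, lt_div_iff₀ (sub_pos.2 h)] at this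
    linarith
  · have := hf.slope_lt_deriv hy hx h hfd
    rw [slope_def_field, div_lt_iff₀ (sub_pos.2 h)] at this
    linarith

lemma add_deriv_mul_sub_le (hf : StrictConvexOn ℝ S f) (hx : x ∈ S) (hy : y ∈ S)
    (hfd : DifferentiableAt ℝ f x) : f x + deriv f x * (y - x) ≤ f y := by
  rcases eq_or_ne x y with rfl | hxy
  · simp
  · exact (hf.add_deriv_mul_sub_lt hx hy hxy hfd).le

lemma add_deriv_mul_sub_eq_iff (hf : StrictConvexOn ℝ S f) (hx : x ∈ S) (hy : y ∈ S)
    (hfd : DifferentiableAt ℝ f x) : f x + deriv f x * (y - x) = f y ↔ x = y := by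
  refine ⟨fun h => ?_, fun h => by simp [h]⟩
  by_contra hxy
  exact (hf.add_deriv_mul_sub_lt hx hy hxy hfd).ne h

variable {a b s : ℝ}

lemma deriv_mul_add_tangentIntercept_mul_le (hf : StrictConvexOn ℝ S f) (hs : s ∈ S)
    (ht : a / b ∈ S) (hb : 0 < b) (hfd : DifferentiableAt ℝ f s) :
    deriv f s * a + tangentIntercept f s * b ≤ f (a / b) * b := by
  rw [deriv_mul_add_tangentIntercept_mul f s a hb.ne']
  exact mul_le_mul_of_nonneg_right (hf.add_deriv_mul_sub_le hs ht hfd) hb.le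

lemma deriv_mul_add_tangentIntercept_mul_eq_iff (hf : StrictConvexOn ℝ S f) (hs : s ∈ S)
    (ht : a / b ∈ S) (hb : 0 < b) (hfd : DifferentiableAt ℝ f s) :
    deriv f s * a + tangentIntercept f s * b = f (a / b) * b ↔ s = a / b := by
  rw [deriv_mul_add_tangentIntercept_mul f s a hb.ne', mul_left_inj' hb.ne',
    hf.add_deriv_mul_sub_eq_iff hs ht hfd]

end StrictConvexOn

theorem stmt_6_general {X : Type*} [MeasurableSpace X] (lam : Measure X)
    (p q pt : X → ℝ) (φ : ℝ → ℝ)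
    (hppos : ∀ᵐ x ∂lam, 0 < p x) (hqpos : ∀ᵐ x ∂lam, 0 < q x)
    (hptpos : ∀ᵐ x ∂lam, 0 < pt x)
    (hconv : StrictConvexOn ℝ (Set.Ioi (0:ℝ)) φ)
    (hdiff : ∀ x ∈ Set.Ioi (0:ℝ), DifferentiableAt ℝ φ x)
    (h1 : Integrable (fun x => φ (p x / q x) * q x) lam)
    (h2 : Integrable (fun x => deriv φ (p x / pt x) * p x) lam)
    (h3 : Integrable
      (fun x => (φ (p x / pt x) - (p x / pt x) * deriv φ (p x / pt x)) * q x) lam) :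
    ((∫ x, deriv φ (p x / pt x) * p x ∂lam) +
        (∫ x, (φ (p x / pt x) - (p x / pt x) * deriv φ (p x / pt x)) * q x ∂lam) ≤
      ∫ x, φ (p x / q x) * q x ∂lam) ∧
    ((∫ x, deriv φ (p x / pt x) * p x ∂lam) +
        (∫ x, (φ (p x / pt x) - (p x / pt x) * deriv φ (p x / pt x)) * q x ∂lam) =
      (∫ x, φ (p x / q x) * q x ∂lam) ↔ pt =ᵐ[lam] q) := by
  set F : X → ℝ := fun x => deriv φ (p x / pt x) * p x + tangentIntercept φ (p x / pt x) * q x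
  have hF : Integrable F lam := h2.add h3
  have hFG : ∀ᵐ x ∂lam, F x ≤ φ (p x / q x) * q x ∧
      (F x = φ (p x / q x) * q x ↔ pt x = q x) := by
    filter_upwards [hppos, hqpos, hptpos] with x hpx hqx hptx
    have hs : p x / pt x ∈ Set.Ioi 0 := div_pos hpx hptx
    have ht : p x / q x ∈ Set.Ioi 0 := div_pos hpx hqx
    refine ⟨hconv.deriv_mul_add_tangentIntercept_mul_le hs ht hqx (hdiff _ hs), ?_⟩
    rw [hconv.deriv_mul_add_tangentIntercept_mul_eq_iff hs ht hqx (hdiff _ hs), div_eq_mul_inv,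
      div_eq_mul_inv, mul_right_inj' hpx.ne', inv_inj]
  have hle : F ≤ᵐ[lam] fun x => φ (p x / q x) * q x := hFG.mono fun _ hx => hx.1
  rw [← integral_add h2 h3]
  exact ⟨integral_mono_ae hF h1 hle,
    (integral_eq_iff_of_ae_le hF h1 hle).trans (Filter.eventually_congr (hFG.mono fun _ hx => hx.2))⟩

theorem stmt_6 {X : Type*} [MeasurableSpace X] (lam : Measure X) [SigmaFinite lam]
    (p q pt : X → ℝ) (φ : ℝ → ℝ)
    (hp : Measurable p) (hq : Measurable q) (hpt : Measurable pt)
    (hppos : ∀ᵐ x ∂lam, 0 < p x) (hqpos : ∀ᵐ x ∂lam, 0 < q x)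
    (hptpos : ∀ᵐ x ∂lam, 0 < pt x)
    (hpone : ∫ x, p x ∂lam = 1) (hqone : ∫ x, q x ∂lam = 1)
    (hptone : ∫ x, pt x ∂lam = 1)
    (hconv : StrictConvexOn ℝ (Set.Ioi (0:ℝ)) φ)
    (hdiff : ∀ x ∈ Set.Ioi (0:ℝ), DifferentiableAt ℝ φ x)
    (hφ1 : φ 1 = 0)
    (h1 : Integrable (fun x => φ (p x / q x) * q x) lam)
    (h2 : Integrable (fun x => deriv φ (p x / pt x) * p x) lam)
    (h3 : Integrable
      (fun x => (φ (p x / pt x) - (p x / pt x) * deriv φ (p x / pt x)) * q x) lam) :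
    ((∫ x, deriv φ (p x / pt x) * p x ∂lam) +
        (∫ x, (φ (p x / pt x) - (p x / pt x) * deriv φ (p x / pt x)) * q x ∂lam) ≤
      ∫ x, φ (p x / q x) * q x ∂lam) ∧
    ((∫ x, deriv φ (p x / pt x) * p x ∂lam) +
        (∫ x, (φ (p x / pt x) - (p x / pt x) * deriv φ (p x / pt x)) * q x ∂lam) =
      (∫ x, φ (p x / q x) * q x ∂lam) ↔ pt =ᵐ[lam] q) :=
  stmt_6_general lam p q pt φ hppos hqpos hptpos hconv hdiff h1 h2 h3
end

section
/- For normal densities p_{μ,σ} and p_{μ̃,σ̃} with 0 < α < 1, the integral ∫ (p_{μ,σ}/p_{μ̃,σ̃})^α p_{μ̃,σ̃} dx equals exp{ −α(1−α)(μ−μ̃)²/(2[ασ̃² + (1−α)σ²]) − ln( √(ασ̃² + (1−α)σ²) / (σ̃^α σ^{1−α}) ) }. -/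
/-!
Write each density as `c(σ) exp(-(x - μ)² / (2σ²))` with `c(σ) = (2πσ²)^{-1/2}`. Since
`(p / p̃)^α p̃ = p^α p̃^{1-α}`, the integrand is `c(σ)^α c(σ̃)^{1-α}` times the exponential of minus
`a (x - μ)² + b (x - μ̃)²` with `a = α / (2σ²)`, `b = (1 - α) / (2σ̃²)`. Completing the square gives
`(a + b)(x - m)² + ab/(a + b) (μ - μ̃)²`, where `a + b = D / (2σ²σ̃²)` and
`ab/(a + b) = α(1 - α) / (2D)` for `D = ασ̃² + (1 - α)σ²`, so the Gaussian integral contributes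
`√(π / (a + b))`, and the constants collapse to `σ̃^α σ^{1-α} / √D`.
-/

open Real MeasureTheory

noncomputable def normalDensity (μ σ x : ℝ) : ℝ :=
  (2 * π * σ ^ 2) ^ (-(1:ℝ) / 2) * exp (-(x - μ) ^ 2 / (2 * σ ^ 2))

lemma mul_sub_sq_add_mul_sub_sq {a b : ℝ} (hab : a + b ≠ 0) (μ ν x : ℝ) :
    a * (x - μ) ^ 2 + b * (x - ν) ^ 2 =
      (a + b) * (x - (a * μ + b * ν) / (a + b)) ^ 2 + a * b / (a + b) * (μ - ν) ^ 2 := by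
  field_simp
  ring

lemma integral_exp_neg_mul_sub_sq (k m : ℝ) : ∫ x, exp (-k * (x - m) ^ 2) = √(π / k) := by
  rw [integral_sub_right_eq_self (fun x ↦ exp (-k * x ^ 2)) m, integral_gaussian]

lemma integral_exp_neg_mul_sub_sq_add_mul_sub_sq {a b : ℝ} (hab : a + b ≠ 0) (μ ν : ℝ) :
    ∫ x, exp (-(a * (x - μ) ^ 2 + b * (x - ν) ^ 2)) =
      exp (-(a * b / (a + b) * (μ - ν) ^ 2)) * √(π / (a + b)) := by
  simp_rw [mul_sub_sq_add_mul_sub_sq hab, neg_add, exp_add, ← neg_mul]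
  rw [integral_mul_const, integral_exp_neg_mul_sub_sq, mul_comm]

lemma div_rpow_mul_eq_rpow_mul_rpow_one_sub {a b : ℝ} (ha : 0 ≤ a) (hb : 0 < b) (α : ℝ) :
    (a / b) ^ α * b = a ^ α * b ^ (1 - α) := by
  rw [div_rpow ha hb.le, rpow_sub hb, rpow_one]
  field_simp

lemma mul_exp_rpow {c : ℝ} (hc : 0 ≤ c) (u α : ℝ) : (c * exp u) ^ α = c ^ α * exp (u * α) := by
  rw [mul_rpow hc (exp_pos u).le, ← exp_mul]

lemma normalDensity_div_rpow_mul (μ μt σ σt α x : ℝ) (hσt : σt ≠ 0) :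
    (normalDensity μ σ x / normalDensity μt σt x) ^ α * normalDensity μt σt x =
      ((2 * π * σ ^ 2) ^ (-(1:ℝ) / 2)) ^ α * ((2 * π * σt ^ 2) ^ (-(1:ℝ) / 2)) ^ (1 - α) *
        exp (-(α / (2 * σ ^ 2) * (x - μ) ^ 2 + (1 - α) / (2 * σt ^ 2) * (x - μt) ^ 2)) := by
  unfold normalDensity
  rw [div_rpow_mul_eq_rpow_mul_rpow_one_sub (by positivity) (by positivity),
    mul_exp_rpow (by positivity), mul_exp_rpow (by positivity), mul_mul_mul_comm, ← exp_add]
  congr 2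
  ring

lemma log_normalConstant {σ : ℝ} (hσ : 0 < σ) :
    log ((2 * π * σ ^ 2) ^ (-(1:ℝ) / 2)) = -log (2 * π) / 2 - log σ := by
  rw [log_rpow (by positivity), log_mul (by positivity) (by positivity), log_pow]
  push_cast
  ring

lemma normalConstant_rpow_mul_rpow_mul_sqrt {σ σt D : ℝ} (hσ : 0 < σ) (hσt : 0 < σt) (hD : 0 < D)
    (α : ℝ) :
    ((2 * π * σ ^ 2) ^ (-(1:ℝ) / 2)) ^ α * ((2 * π * σt ^ 2) ^ (-(1:ℝ) / 2)) ^ (1 - α) *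
      √(2 * π * σ ^ 2 * σt ^ 2 / D) = σt ^ α * σ ^ (1 - α) / √D := by
  have hc : ∀ s : ℝ, 0 < s → 0 < (2 * π * s ^ 2) ^ (-(1:ℝ) / 2) := fun s hs ↦ by positivity
  have hlog_sqrt :
      log √(2 * π * σ ^ 2 * σt ^ 2 / D) = log (2 * π) / 2 + log σ + log σt - log D / 2 := by
    rw [log_sqrt (by positivity), log_div (by positivity) hD.ne',
      log_mul (by positivity) (by positivity), log_mul (by positivity) (by positivity),
      log_pow, log_pow]
    push_cast
    ring
  have hlog_rhs : log (σt ^ α * σ ^ (1 - α) / √D) = α * log σt + (1 - α) * log σ - log D / 2 := by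
    rw [log_div (by positivity) (by positivity), log_mul (by positivity) (by positivity),
      log_rpow hσt, log_rpow hσ, log_sqrt hD.le]
  refine log_injOn_pos (Set.mem_Ioi.2 (by positivity)) (Set.mem_Ioi.2 (by positivity)) ?_
  rw [log_mul (by positivity) (by positivity), log_mul (by positivity) (by positivity),
    log_rpow (hc σ hσ), log_rpow (hc σt hσt), log_normalConstant hσ, log_normalConstant hσt,
    hlog_sqrt, hlog_rhs]
  ring

theorem integral_normalDensity_div_rpow_mul (μ μt : ℝ) {σ σt : ℝ} (hσ : 0 < σ) (hσt : 0 < σt)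
    {α : ℝ} (hD : 0 < α * σt ^ 2 + (1 - α) * σ ^ 2) :
    ∫ x, (normalDensity μ σ x / normalDensity μt σt x) ^ α * normalDensity μt σt x =
      exp (-(α * (1 - α) * (μ - μt) ^ 2) / (2 * (α * σt ^ 2 + (1 - α) * σ ^ 2))) *
        (σt ^ α * σ ^ (1 - α)) / √(α * σt ^ 2 + (1 - α) * σ ^ 2) := by
  set D := α * σt ^ 2 + (1 - α) * σ ^ 2
  have hsum : α / (2 * σ ^ 2) + (1 - α) / (2 * σt ^ 2) = D / (2 * σ ^ 2 * σt ^ 2) := by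
    field_simp
    ring
  have hprod : α / (2 * σ ^ 2) * ((1 - α) / (2 * σt ^ 2)) / (D / (2 * σ ^ 2 * σt ^ 2)) =
      α * (1 - α) / (2 * D) := by
    field_simp
  have hvar : π / (D / (2 * σ ^ 2 * σt ^ 2)) = 2 * π * σ ^ 2 * σt ^ 2 / D := by
    field_simp
  simp_rw [normalDensity_div_rpow_mul μ μt σ σt α _ hσt.ne']
  rw [integral_const_mul, integral_exp_neg_mul_sub_sq_add_mul_sub_sq (hsum ▸ by positivity),
    hsum, hprod, hvar, mul_left_comm, normalConstant_rpow_mul_rpow_mul_sqrt hσ hσt hD,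
    ← mul_div_assoc]
  congr 4
  ring

theorem stmt_18 (μ μt σ σt α : ℝ) (hσ : 0 < σ) (hσt : 0 < σt)
    (hα0 : 0 < α) (hα1 : α < 1) :
    (∫ x : ℝ,
        (((2 * Real.pi * σ ^ 2) ^ (-(1:ℝ) / 2) *
            Real.exp (-(x - μ) ^ 2 / (2 * σ ^ 2))) /
          ((2 * Real.pi * σt ^ 2) ^ (-(1:ℝ) / 2) *
            Real.exp (-(x - μt) ^ 2 / (2 * σt ^ 2)))) ^ α *
        ((2 * Real.pi * σt ^ 2) ^ (-(1:ℝ) / 2) *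
          Real.exp (-(x - μt) ^ 2 / (2 * σt ^ 2))))
      = Real.exp (-(α * (1 - α) * (μ - μt) ^ 2) /
            (2 * (α * σt ^ 2 + (1 - α) * σ ^ 2)) -
          Real.log (Real.sqrt (α * σt ^ 2 + (1 - α) * σ ^ 2) /
            (σt ^ α * σ ^ (1 - α)))) := by
  have hD : 0 < α * σt ^ 2 + (1 - α) * σ ^ 2 := by
    have : 0 < 1 - α := sub_pos.2 hα1
    positivity
  change ∫ x, (normalDensity μ σ x / normalDensity μt σt x) ^ α * normalDensity μt σt x = _
  rw [integral_normalDensity_div_rpow_mul μ μt hσ hσt hD, exp_sub, exp_log (by positivity),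
    div_div_eq_mul_div]
end
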